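/- Let Π be a normal logic program and Φ its explicit version. A set M ⊆ At(Π) is a stable model of Π iff M^¬ is a stable model of Φ, where M^¬ = M ∪ {¬p : p ∈ At(Π), p ∉ M}. -/

import Mathlib

namespace DLWFS

universe u

/-- Ground literals over a type `A` of atoms: atoms and their classical complements. -/
inductive Lit (A : Type u) : Type u where
  | pos : A → Lit A
  | neg : A → Lit A

/-- The classical complement `p̄` of a literal `p`. -/
def Lit.compl {A : Type u} : Lit A → Lit A
  | .pos a => .neg a
  | .neg a => .pos a

/-- The three kinds of rules of a defeasible theory. -/
inductive RuleKind : Type where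
  | strict
  | defeasible
  | defeater
deriving DecidableEq

/-- A rule of a defeasible theory: a kind, a body (a set of literals) and a head literal. -/
structure DRule (A : Type u) where
  kind : RuleKind
  body : Set (Lit A)
  head : Lit A

/-- A defeasible theory `D = ⟨R, C, ≺⟩`. -/
structure DTheory (A : Type u) where
  rules : Set (DRule A)
  conflicts : Set (Set (Lit A))
  prec : DRule A → DRule A → Prop

namespace DTheory

variable {A : Type u}

/-- The strict rules `R_s`. -/
def Rs (D : DTheory A) : Set (DRule A) := {r ∈ D.rules | r.kind = RuleKind.strict}

/-- The defeasible rules `R_d`. -/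
def Rd (D : DTheory A) : Set (DRule A) := {r ∈ D.rules | r.kind = RuleKind.defeasible}

/-- The defeater rules `R_u`. -/
def Ru (D : DTheory A) : Set (DRule A) := {r ∈ D.rules | r.kind = RuleKind.defeater}

/-- `C[p]`: the conflict sets containing literal `p`. -/
def Cset (D : DTheory A) (p : Lit A) : Set (Set (Lit A)) := {c ∈ D.conflicts | p ∈ c}

/-- Structural conditions in the definition of a defeasible theory: a countable set of
rules with finite bodies, a countable set of finite conflict sets containing every
minimal conflict set `{p, ¬p}`, and an acyclic priority relation over non-strict rules. -/
def WellFormed (D : DTheory A) : Prop :=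
  D.rules.Countable ∧ D.conflicts.Countable ∧
  (∀ r ∈ D.rules, r.body.Finite) ∧
  (∀ c ∈ D.conflicts, c.Finite) ∧
  (∀ p : A, ({Lit.pos p, Lit.neg p} : Set (Lit A)) ∈ D.conflicts) ∧
  (∀ r s, D.prec r s → r.kind ≠ RuleKind.strict ∧ s.kind ≠ RuleKind.strict) ∧
  (∀ r, ¬ Relation.TransGen D.prec r r)

/-- `C = C_MIN`: the conflict sets are exactly the minimal ones `{p, ¬p}`. -/
def MinimalConflicts (D : DTheory A) : Prop :=
  D.conflicts = {c | ∃ p : A, c = ({Lit.pos p, Lit.neg p} : Set (Lit A))}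

end DTheory

/-- A 3-valued interpretation: a pair `⟨T, F⟩` of sets. -/
abbrev Interp (L : Type u) : Type u := Set L × Set L

variable {A : Type u}

/-- `S` is ADL-unfounded with respect to theory `D` and interpretation `I = ⟨T, F⟩`. -/
def ADLUnfounded (D : DTheory A) (I : Interp (Lit A)) (S : Set (Lit A)) : Prop :=
  ∀ p ∈ S,
    (∀ r ∈ D.Rs, r.head = p → (r.body ∩ (I.2 ∪ S)).Nonempty) ∧
    (∀ r ∈ D.Rd, r.head = p →
      (r.body ∩ (I.2 ∪ S)).Nonempty ∨
      ∃ c ∈ D.conflicts, p ∈ c ∧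
        ∀ q ∈ c \ {p}, ∃ s ∈ D.rules, s.head = q ∧ s.body ⊆ I.1 ∧
          (D.prec r s ∨ s.kind = RuleKind.strict))

/-- `S` is NDL-unfounded with respect to theory `D` and interpretation `I = ⟨T, F⟩`. -/
def NDLUnfounded (D : DTheory A) (I : Interp (Lit A)) (S : Set (Lit A)) : Prop :=
  ∀ p ∈ S,
    (∀ r ∈ D.Rs, r.head = p → (r.body ∩ (I.2 ∪ S)).Nonempty) ∧
    (∀ r ∈ D.Rd, r.head = p →
      (r.body ∩ (I.2 ∪ S)).Nonempty ∨
      ∃ c ∈ D.conflicts, p ∈ c ∧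
        ∀ q ∈ c \ {p}, ∃ s ∈ D.rules, s.head = q ∧ s.body ⊆ I.1 ∧
          ¬ D.prec s r)

/-- `U_D(I)` for ADL: the union of all ADL-unfounded sets. -/
def UA (D : DTheory A) (I : Interp (Lit A)) : Set (Lit A) :=
  ⋃₀ {S | ADLUnfounded D I S}

/-- `U_D(I)` for NDL: the union of all NDL-unfounded sets. -/
def UN (D : DTheory A) (I : Interp (Lit A)) : Set (Lit A) :=
  ⋃₀ {S | NDLUnfounded D I S}

/-- `T_D(I)`: the literals having a witness of provability with respect to `I = ⟨T, F⟩`. -/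
def TD (D : DTheory A) (I : Interp (Lit A)) : Set (Lit A) :=
  {p | ∃ r ∈ D.rules, r.head = p ∧ r.body ⊆ I.1 ∧
    (r.kind = RuleKind.strict ∨
      (r.kind = RuleKind.defeasible ∧
        ∀ c ∈ D.conflicts, p ∈ c →
          ∃ q ∈ c \ {p}, ∀ s ∈ D.rules, s.head = q →
            (D.prec s r ∨ (s.body ∩ I.2).Nonempty)))}

/-- `W_D` for ADL. -/
def WA (D : DTheory A) (I : Interp (Lit A)) : Interp (Lit A) := (TD D I, UA D I)

/-- `W_D` for NDL. -/
def WN (D : DTheory A) (I : Interp (Lit A)) : Interp (Lit A) := (TD D I, UN D I)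

/-- `I` is the well-founded model for the operator `W`: the least fixpoint of `W`
(componentwise order). -/
def IsWFModel {L : Type u} (W : Interp L → Interp L) (I : Interp L) : Prop :=
  W I = I ∧ ∀ J, W J = J → I.1 ⊆ J.1 ∧ I.2 ⊆ J.2

/-- A rule of a normal logic program: `head ← pos, ∼neg`. -/
structure NRule (A : Type u) where
  head : A
  pos : Set A
  neg : Set A

/-- A normal logic program: a set of rules. -/
abbrev NProgram (A : Type u) : Type u := Set (NRule A)

/-- Structural conditions in the definition of a normal logic program: a countable
set of ground rules with finite bodies. -/
def NProgram.WellFormed (P : NProgram A) : Prop :=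
  P.Countable ∧ ∀ r ∈ P, r.pos.Finite ∧ r.neg.Finite

/-- The immediate consequence operator `T_Π` on 3-valued interpretations. -/
def TP (P : NProgram A) (I : Interp A) : Set A :=
  {a | ∃ r ∈ P, r.head = a ∧ r.pos ⊆ I.1 ∧ r.neg ⊆ I.2}

/-- `S` is an unfounded set of program `P` with respect to interpretation `I = ⟨T, F⟩`. -/
def PUnfounded (P : NProgram A) (I : Interp A) (S : Set A) : Prop :=
  ∀ p ∈ S, ∀ r ∈ P, r.head = p →
    (r.pos ∩ (I.2 ∪ S)).Nonempty ∨ (r.neg ∩ I.1).Nonempty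

/-- `U_Π(I)`: the greatest unfounded set (union of all unfounded sets). -/
def UP (P : NProgram A) (I : Interp A) : Set A :=
  ⋃₀ {S | PUnfounded P I S}

/-- `W_Π(I) = ⟨T_Π(I), U_Π(I)⟩`. -/
def WP (P : NProgram A) (I : Interp A) : Interp A := (TP P I, UP P I)

/-- Transfinite iteration of an operator `W` from `⊥`, taking suprema at limit ordinals. -/
noncomputable def iterW {α : Type*} [CompleteLattice α] (W : α → α) : Ordinal.{0} → α :=
  fun o =>
    Ordinal.limitRecOn (motive := fun _ => α) o ⊥ (fun _ ih => W ih)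
      (fun o' _ ih => ⨆ x : Set.Iio o', ih x.1 x.2)

/-- One step of the immediate consequence operator for a set of defeasible-theory rules. -/
def TRstep (R : Set (DRule A)) (S : Set (Lit A)) : Set (Lit A) :=
  {p | ∃ r ∈ R, r.head = p ∧ r.body ⊆ S}

/-- The finite iterates `T_R ↑ n`. -/
def TRiter (R : Set (DRule A)) : ℕ → Set (Lit A)
  | 0 => ∅
  | n + 1 => TRstep R (TRiter R n)

/-- `Cl(R) = T_R ↑ ω`. -/
def ClR (R : Set (DRule A)) : Set (Lit A) := ⋃ n, TRiter R n

/-- The `α`-reduct `D_α^S` of a defeasible theory. -/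
def alphaReduct (D : DTheory A) (S : Set (Lit A)) : Set (DRule A) :=
  D.Rs ∪ {r ∈ D.Rd | ∀ c ∈ D.conflicts, r.head ∈ c → ∃ q ∈ c \ {r.head}, q ∉ S}

/-- The ambiguity-propagating operator `α_D(S) = Cl(D_α^S)`. -/
def alphaOp (D : DTheory A) (S : Set (Lit A)) : Set (Lit A) := ClR (alphaReduct D S)

/-- The `β`-reduct `D_β^S` of a defeasible theory. -/
def betaReduct (D : DTheory A) (S : Set (Lit A)) : Set (DRule A) :=
  D.Rs ∪ {r ∈ D.Rd | ∀ c ∈ D.conflicts, r.head ∈ c →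
    ∃ q ∈ c \ {r.head}, ∀ s ∈ D.rules, s.head = q → (¬ s.body ⊆ S ∨ D.prec s r)}

/-- The ambiguity-blocking operator `β_D(S) = Cl(D_β^S)`. -/
def betaOp (D : DTheory A) (S : Set (Lit A)) : Set (Lit A) := ClR (betaReduct D S)

/-- `S` is an `α`-stable set of `D`. -/
def AlphaStable (D : DTheory A) (S : Set (Lit A)) : Prop := alphaOp D S = S

/-- `S` is a `β`-stable set of `D`. -/
def BetaStable (D : DTheory A) (S : Set (Lit A)) : Prop := betaOp D S = S

/-- The sequence `X_D↑λ`: `X↑0 = ∅`, `X↑(λ+1) = β_D(β_D(X↑λ))`, unions at limits. -/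
noncomputable def Xseq (D : DTheory A) : Ordinal.{0} → Set (Lit A) :=
  iterW (fun S => betaOp D (betaOp D S))

/-- The Gelfond–Lifschitz reduct `Π^S`. -/
def glReduct (P : NProgram A) (S : Set A) : NProgram A :=
  {r' | ∃ r ∈ P, r.neg ∩ S = ∅ ∧ r' = NRule.mk r.head r.pos ∅}

/-- One step of the immediate consequence operator for a NAF-free program. -/
def TPstep (P : NProgram A) (S : Set A) : Set A :=
  {a | ∃ r ∈ P, r.head = a ∧ r.pos ⊆ S}

/-- The finite iterates `T_Π ↑ n` of a NAF-free program. -/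
def TPiter (P : NProgram A) : ℕ → Set A
  | 0 => ∅
  | n + 1 => TPstep P (TPiter P n)

/-- `Cl(Π) = T_Π ↑ ω`. -/
def ClP (P : NProgram A) : Set A := ⋃ n, TPiter P n

/-- The Gelfond–Lifschitz operator `γ_Π(S) = Cl(Π^S)`. -/
def gamma (P : NProgram A) (S : Set A) : Set A := ClP (glReduct P S)

/-- `S` is a stable model of `P`. -/
def StableModel (P : NProgram A) (S : Set A) : Prop := gamma P S = S

/-- `Prod(C[p])`: all sets obtained by choosing one literal other than `p` from each
conflict set containing `p`. -/
def ProdC (D : DTheory A) (p : Lit A) : Set (Set (Lit A)) :=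
  {Q | ∃ f : Set (Lit A) → Lit A,
    (∀ c ∈ D.conflicts, p ∈ c → f c ∈ c \ {p}) ∧
    Q = f '' {c ∈ D.conflicts | p ∈ c}}

/-- The logic program translation `Π_D` of a defeasible theory `D` (negative literals
are treated as fresh atoms, so the atoms of the program are the literals of `D`). -/
def lpTrans (D : DTheory A) : NProgram (Lit A) :=
  {r' | ∃ r ∈ D.Rs, r' = NRule.mk r.head r.body ∅} ∪
  {r' | ∃ r ∈ D.Rd, ∃ Q ∈ ProdC D r.head, r' = NRule.mk r.head r.body Q}

/-- The explicit version `Φ` of a normal program `Π`: atoms of `Φ` are the literals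
over the atoms of `Π` (`¬p` being a fresh atom). -/
def explicitVer (P : NProgram A) : NProgram (Lit A) :=
  {r' | ∃ r ∈ P, r' = NRule.mk (Lit.pos r.head) (Lit.pos '' r.pos ∪ Lit.neg '' r.neg) ∅} ∪
  {r' | ∃ p : A, r' = NRule.mk (Lit.neg p) ∅ {Lit.pos p}}

/-- The minimal conflict sets over atom type `A`. -/
def CMin (A : Type u) : Set (Set (Lit A)) :=
  {c | ∃ p : A, c = ({Lit.pos p, Lit.neg p} : Set (Lit A))}

/-- The defeasible theory translation `D_Π` of a normal program `Π`: each program rule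
becomes a strict rule (default literals `∼b` becoming negative literals `¬b`), and each
atom `p` yields a presumption `∅ ⇒ ¬p`; conflict sets are minimal and `≺` is empty. -/
def dtTrans (P : NProgram A) : DTheory A :=
  { rules :=
      {e | ∃ r ∈ P, e = DRule.mk RuleKind.strict
            (Lit.pos '' r.pos ∪ Lit.neg '' r.neg) (Lit.pos r.head)} ∪
      {e | ∃ p : A, e = DRule.mk RuleKind.defeasible ∅ (Lit.neg p)}
    conflicts := CMin A
    prec := fun _ _ => False }

/-- `M^¬ = M ∪ {¬p : p ∉ M}`, atoms being identified with positive literals. -/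
def negCompl (M : Set A) : Set (Lit A) :=
  Lit.pos '' M ∪ Lit.neg '' {p | p ∉ M}

end DLWFS

/-!
Reducing `Φ` with respect to `M^¬` keeps every translated rule of `Π` (they have no default
literals) and keeps exactly the facts `¬p` with `p ∉ M`. In this reduct a rule
`p ← a₁, …, aₙ, ¬b₁, …, ¬bₘ` fires precisely when the rule `p ← a₁, …, aₙ` of `Π^M` does,
up to a delay of one step for the facts `¬bⱼ` to be derived. Hence the positive part of
`γ_Φ(M^¬)` is `γ_Π(M)` and its negative part is `{¬p : p ∉ M}`.
-/

namespace DLWFS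

section

variable {A : Type*}

theorem lit_set_eq_iff_preimage {S T : Set (Lit A)} :
    S = T ↔ Lit.pos ⁻¹' S = Lit.pos ⁻¹' T ∧ Lit.neg ⁻¹' S = Lit.neg ⁻¹' T := by
  refine ⟨fun h => h ▸ ⟨rfl, rfl⟩, fun ⟨hpos, hneg⟩ => Set.ext fun x => ?_⟩
  cases x with
  | pos a => exact Set.ext_iff.mp hpos a
  | neg a => exact Set.ext_iff.mp hneg a

@[simp]
theorem preimage_pos_negCompl (M : Set A) : Lit.pos ⁻¹' negCompl M = M := by
  ext a
  simp [negCompl]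

@[simp]
theorem preimage_neg_negCompl (M : Set A) : Lit.neg ⁻¹' negCompl M = Mᶜ := by
  ext a
  simp [negCompl]

theorem mem_TPstep_glReduct {P : NProgram A} {M S : Set A} {a : A} :
    a ∈ TPstep (glReduct P M) S ↔ ∃ r ∈ P, r.head = a ∧ r.pos ⊆ S ∧ r.neg ∩ M = ∅ := by
  constructor
  · rintro ⟨_, ⟨r, hr, hneg, rfl⟩, rfl, hpos⟩
    exact ⟨r, hr, rfl, hpos, hneg⟩
  · rintro ⟨r, hr, rfl, hpos, hneg⟩
    exact ⟨_, ⟨r, hr, hneg, rfl⟩, rfl, hpos⟩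

section ExplicitReduct

variable {P : NProgram A} {M : Set A} {S : Set (Lit A)}

theorem pos_mem_TPstep_glReduct_explicitVer {a : A} :
    Lit.pos a ∈ TPstep (glReduct (explicitVer P) (negCompl M)) S ↔
      ∃ r ∈ P, r.head = a ∧ r.pos ⊆ Lit.pos ⁻¹' S ∧ r.neg ⊆ Lit.neg ⁻¹' S := by
  constructor
  · rintro ⟨_, ⟨_, ⟨r, hr, rfl⟩ | ⟨p, rfl⟩, -, rfl⟩, hhead, hbody⟩
    · cases hhead
      exact ⟨r, hr, rfl, fun b hb => hbody (.inl ⟨b, hb, rfl⟩),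
        fun b hb => hbody (.inr ⟨b, hb, rfl⟩)⟩
    · cases hhead
  · rintro ⟨r, hr, rfl, hpos, hneg⟩
    refine ⟨_, ⟨_, .inl ⟨r, hr, rfl⟩, Set.empty_inter _, rfl⟩, rfl, ?_⟩
    exact Set.union_subset (Set.image_subset_iff.mpr hpos) (Set.image_subset_iff.mpr hneg)

theorem neg_mem_TPstep_glReduct_explicitVer {p : A} :
    Lit.neg p ∈ TPstep (glReduct (explicitVer P) (negCompl M)) S ↔ p ∉ M := by
  constructor
  · rintro ⟨_, ⟨_, ⟨r, hr, rfl⟩ | ⟨q, rfl⟩, hblocked, rfl⟩, hhead, -⟩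
    · cases hhead
    · cases hhead
      intro hp
      exact (Set.eq_empty_iff_forall_notMem.mp hblocked) (Lit.pos p)
        ⟨rfl, Or.inl ⟨p, hp, rfl⟩⟩
  · intro hp
    refine ⟨_, ⟨_, .inr ⟨p, rfl⟩, ?_, rfl⟩, rfl, Set.empty_subset _⟩
    rw [Set.singleton_inter_eq_empty]
    exact fun h => hp ((preimage_pos_negCompl M).subset h)

theorem preimage_neg_TPiter_explicitVer_subset (n : ℕ) :
    Lit.neg ⁻¹' TPiter (glReduct (explicitVer P) (negCompl M)) n ⊆ Mᶜ := by
  cases n with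
  | zero => simp [TPiter]
  | succ n => exact fun p hp => neg_mem_TPstep_glReduct_explicitVer.mp hp

theorem preimage_pos_TPiter_explicitVer_subset (n : ℕ) :
    Lit.pos ⁻¹' TPiter (glReduct (explicitVer P) (negCompl M)) n ⊆ TPiter (glReduct P M) n := by
  induction n with
  | zero => simp [TPiter]
  | succ n ih =>
    intro a ha
    obtain ⟨r, hr, rfl, hpos, hneg⟩ := pos_mem_TPstep_glReduct_explicitVer.mp ha
    have hdisj : r.neg ∩ M = ∅ :=
      Set.disjoint_iff_inter_eq_empty.mp <|
        Set.subset_compl_iff_disjoint_right.mp (hneg.trans (preimage_neg_TPiter_explicitVer_subset n))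
    exact mem_TPstep_glReduct.mpr ⟨r, hr, rfl, hpos.trans ih, hdisj⟩

theorem compl_subset_preimage_neg_TPiter_explicitVer (n : ℕ) :
    Mᶜ ⊆ Lit.neg ⁻¹' TPiter (glReduct (explicitVer P) (negCompl M)) (n + 1) :=
  fun _ hp => neg_mem_TPstep_glReduct_explicitVer.mpr hp

theorem TPiter_subset_preimage_pos_TPiter_explicitVer (n : ℕ) :
    TPiter (glReduct P M) n ⊆ Lit.pos ⁻¹' TPiter (glReduct (explicitVer P) (negCompl M)) (n + 1) := by
  induction n with
  | zero => simp [TPiter]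
  | succ n ih =>
    intro a ha
    obtain ⟨r, hr, rfl, hpos, hneg⟩ := mem_TPstep_glReduct.mp ha
    have hneg' : r.neg ⊆ Mᶜ := Set.subset_compl_iff_disjoint_right.mpr
      (Set.disjoint_iff_inter_eq_empty.mpr hneg)
    exact pos_mem_TPstep_glReduct_explicitVer.mpr
      ⟨r, hr, rfl, hpos.trans ih, hneg'.trans (compl_subset_preimage_neg_TPiter_explicitVer n)⟩

variable (P M)

theorem preimage_pos_gamma_explicitVer :
    Lit.pos ⁻¹' gamma (explicitVer P) (negCompl M) = gamma P M := by
  simp only [gamma, ClP, Set.preimage_iUnion]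
  refine Set.Subset.antisymm (Set.iUnion_mono preimage_pos_TPiter_explicitVer_subset) ?_
  exact Set.iUnion_subset fun n =>
    (TPiter_subset_preimage_pos_TPiter_explicitVer n).trans (Set.subset_iUnion_of_subset (n + 1) le_rfl)

theorem preimage_neg_gamma_explicitVer :
    Lit.neg ⁻¹' gamma (explicitVer P) (negCompl M) = Mᶜ := by
  simp only [gamma, ClP, Set.preimage_iUnion]
  refine Set.Subset.antisymm (Set.iUnion_subset preimage_neg_TPiter_explicitVer_subset) ?_
  exact (compl_subset_preimage_neg_TPiter_explicitVer 0).trans (Set.subset_iUnion_of_subset 1 le_rfl)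

end ExplicitReduct

end

theorem explicit_version_stable_models_general {A : Type*} (P : NProgram A) :
    ∀ M : Set A, StableModel P M ↔ StableModel (explicitVer P) (negCompl M) := by
  intro M
  rw [StableModel, StableModel, lit_set_eq_iff_preimage, preimage_pos_gamma_explicitVer,
    preimage_neg_gamma_explicitVer, preimage_pos_negCompl, preimage_neg_negCompl]
  exact (and_iff_left rfl).symm

/-- Let `Π` be a normal program and `Φ` its explicit version. A set `M ⊆ At(Π)` is a
stable model of `Π` iff `M^¬ = M ∪ {¬p : p ∉ M}` is a stable model of `Φ`. -/
theorem explicit_version_stable_models {A : Type*} (P : NProgram A) (hwf : P.WellFormed) :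
    ∀ M : Set A, StableModel P M ↔ StableModel (explicitVer P) (negCompl M) :=
  explicit_version_stable_models_general P

end DLWFS
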